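/- For a fixed integer t ≥ 2, among all positive integers k, the quantity c(k) defined by c(k) = 1/(2k) if k/gcd(k,t) is odd, c(k) = √(1+3·gcd(k,t)²)/k if k/gcd(k,t) ≡ 2 (mod 4), and c(k) = 1/k if 4 divides k/gcd(k,t), attains its unique maximum at k = 2^{s+1}, where 2^s is the exact power of 2 dividing t; the maximum value is √(1+3·4^s)/2^{s+1}. -/

import Mathlib

/-!
When `k₀ = k / gcd(k, t)` is even, `k₀` and `t / gcd(k, t)` are coprime, so `t / gcd(k, t)` is odd
and the whole power `2 ^ s` of `t` divides `gcd(k, t)`; hence `k ≥ 2 ^ (s + 1)`. In the case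
`k₀ ≡ 2 (mod 4)` the rate is `√(1 / k² + 3 / k₀²)`, which is strictly decreasing in `k` and in
`k₀ ≥ 2`, so it is largest at `k = 2 ^ (s + 1)`, `k₀ = 2`. In the other two cases the rate is at
most `1 / 2 < √3 / 2`.
-/

/-- The growth rate `c(k)` of the Bessel argument in the Rademacher expansion of `A_t(n)`. -/
noncomputable def besselRate (t k : ℕ) : ℝ :=
  if (k / Nat.gcd k t) % 2 = 1 then 1 / (2 * k)
  else if (k / Nat.gcd k t) % 4 = 2 then Real.sqrt (1 + 3 * (Nat.gcd k t : ℝ) ^ 2) / k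
  else 1 / k

lemma gcd_two_pow_succ_mul_odd {s ℓ : ℕ} (hℓ : Odd ℓ) : Nat.gcd (2 ^ (s + 1)) (2 ^ s * ℓ) = 2 ^ s := by
  rw [pow_succ, Nat.gcd_mul_left, Nat.coprime_two_left.mpr hℓ, mul_one]

lemma two_pow_dvd_gcd_of_even_div_gcd {k t s : ℕ} (hk : 0 < k) (hs : 2 ^ s ∣ t)
    (h : Even (k / Nat.gcd k t)) : 2 ^ s ∣ Nat.gcd k t := by
  have hg : 0 < Nat.gcd k t := Nat.gcd_pos_of_pos_left t hk
  have hodd : Odd (t / Nat.gcd k t) := Nat.coprime_two_left.mp <|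
    (Nat.coprime_div_gcd_div_gcd hg).coprime_dvd_left (even_iff_two_dvd.mp h)
  refine (Nat.coprime_two_left.mpr hodd).pow_left s |>.dvd_of_dvd_mul_right ?_
  rwa [Nat.mul_div_cancel' (Nat.gcd_dvd_right k t)]

lemma two_pow_succ_le_of_even_div_gcd {k t s : ℕ} (hk : 0 < k) (hs : 2 ^ s ∣ t)
    (h : Even (k / Nat.gcd k t)) : 2 ^ (s + 1) ≤ k := by
  refine Nat.le_of_dvd hk ?_
  rw [pow_succ, ← Nat.mul_div_cancel' (Nat.gcd_dvd_left k t)]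
  exact mul_dvd_mul (two_pow_dvd_gcd_of_even_div_gcd hk hs h) (even_iff_two_dvd.mp h)

lemma sqrt_one_add_three_mul_sq_div_mul {g k₀ : ℝ} (hg : 0 < g) (hk₀ : 0 < k₀) :
    √(1 + 3 * g ^ 2) / (g * k₀) = √(1 / (g * k₀) ^ 2 + 3 / k₀ ^ 2) := by
  rw [show 1 / (g * k₀) ^ 2 + 3 / k₀ ^ 2 = (1 + 3 * g ^ 2) / (g * k₀) ^ 2 by field_simp,
    Real.sqrt_div' _ (by positivity), Real.sqrt_sq (mul_pos hg hk₀).le]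

lemma besselRate_of_div_gcd_mod_four_eq_two {t k : ℕ} (hk : 0 < k)
    (h : k / Nat.gcd k t % 4 = 2) :
    besselRate t k = √(1 / (k : ℝ) ^ 2 + 3 / ((k / Nat.gcd k t : ℕ) : ℝ) ^ 2) := by
  have hg : 0 < Nat.gcd k t := Nat.gcd_pos_of_pos_left t hk
  have hk₀ : 0 < k / Nat.gcd k t := Nat.div_pos (Nat.gcd_le_left t hk) hg
  have hcast : (k : ℝ) = Nat.gcd k t * ((k / Nat.gcd k t : ℕ) : ℝ) := by
    exact_mod_cast (Nat.mul_div_cancel' (Nat.gcd_dvd_left k t)).symm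
  rw [besselRate, if_neg (by omega), if_pos h, hcast]
  exact sqrt_one_add_three_mul_sq_div_mul (by exact_mod_cast hg) (by exact_mod_cast hk₀)

lemma besselRate_le_half_of_div_gcd_mod_four_ne_two {t k : ℕ} (hk : 0 < k)
    (h : k / Nat.gcd k t % 4 ≠ 2) : besselRate t k ≤ 1 / 2 := by
  have hk₀ : 0 < k / Nat.gcd k t := Nat.div_pos (Nat.gcd_le_left t hk) (Nat.gcd_pos_of_pos_left t hk)
  have hk₀le : k / Nat.gcd k t ≤ k := Nat.div_le_self k _
  have hkR : (1 : ℝ) ≤ k := by exact_mod_cast hk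
  rw [besselRate, if_neg h]
  split_ifs
  · gcongr
    linarith
  · have : (2 : ℝ) ≤ k := by exact_mod_cast (show 2 ≤ k by omega)
    gcongr

lemma sqrt_inv_sq_add_three_div_sq_lt {N k k₀ : ℝ} (hN : 0 < N) (hNk : N < k) (hk₀ : 2 ≤ k₀) :
    √(1 / k ^ 2 + 3 / k₀ ^ 2) < √(1 / N ^ 2 + 3 / 2 ^ 2) := by
  apply Real.sqrt_lt_sqrt (by positivity)
  apply add_lt_add_of_lt_of_le <;> gcongr

lemma half_lt_sqrt_inv_sq_add_three_div_four (N : ℝ) : 1 / 2 < √(1 / N ^ 2 + 3 / 2 ^ 2) := by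
  rw [Real.lt_sqrt (by norm_num)]
  have : 0 ≤ 1 / N ^ 2 := by positivity
  linarith

theorem stmt15_general (t s ℓ : ℕ) (htfac : t = 2 ^ s * ℓ) (hℓ : Odd ℓ) :
    besselRate t (2 ^ (s + 1)) = Real.sqrt (1 + 3 * 4 ^ s) / 2 ^ (s + 1) ∧
    ∀ k : ℕ, 1 ≤ k → k ≠ 2 ^ (s + 1) → besselRate t k < besselRate t (2 ^ (s + 1)) := by
  have hquot : 2 ^ (s + 1) / Nat.gcd (2 ^ (s + 1)) t = 2 := by
    rw [htfac, gcd_two_pow_succ_mul_odd hℓ, pow_succ, Nat.mul_div_cancel_left _ (by positivity)]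
  have hmax : besselRate t (2 ^ (s + 1)) = √(1 / ((2 : ℝ) ^ (s + 1)) ^ 2 + 3 / 2 ^ 2) := by
    rw [besselRate_of_div_gcd_mod_four_eq_two (by positivity) (by rw [hquot]), hquot]
    push_cast
    rfl
  refine ⟨?_, fun k hk hne => ?_⟩
  · rw [hmax, show (4 : ℝ) ^ s = (2 ^ s) ^ 2 by rw [← pow_mul, mul_comm, pow_mul]; norm_num,
      pow_succ (2 : ℝ) s, sqrt_one_add_three_mul_sq_div_mul (by positivity) two_pos]
  · rw [hmax]
    by_cases h : k / Nat.gcd k t % 4 = 2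
    · have hle := two_pow_succ_le_of_even_div_gcd hk (htfac ▸ dvd_mul_right _ _)
        (Nat.even_iff.mpr (by omega))
      rw [besselRate_of_div_gcd_mod_four_eq_two hk h]
      apply sqrt_inv_sq_add_three_div_sq_lt (by positivity)
      · exact_mod_cast lt_of_le_of_ne hle (Ne.symm hne)
      · exact_mod_cast (show 2 ≤ k / Nat.gcd k t by generalize k / Nat.gcd k t = m at h; omega)
    · exact (besselRate_le_half_of_div_gcd_mod_four_ne_two hk h).trans_lt
        (half_lt_sqrt_inv_sq_add_three_div_four _)

theorem stmt15 (t s ℓ : ℕ) (ht : 2 ≤ t) (htfac : t = 2 ^ s * ℓ) (hℓ : Odd ℓ) :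
    besselRate t (2 ^ (s + 1)) = Real.sqrt (1 + 3 * 4 ^ s) / 2 ^ (s + 1) ∧
    ∀ k : ℕ, 1 ≤ k → k ≠ 2 ^ (s + 1) → besselRate t k < besselRate t (2 ^ (s + 1)) :=
  stmt15_general t s ℓ htfac hℓ
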